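/- Let M be the set of fixed-point-free involutions in the symmetric group on the set {1, 2, 3, 4, 5, 6} (M has exactly 15 elements), and let the subgroup H of S₆ generated by the permutations (1 2 3)(4 5 6) and (1 4)(2 6)(3 5) act on M by conjugation. Then this action has exactly 7 orbits: exactly 3 orbits of size 1 and exactly 4 orbits of size 3. -/

import Mathlib

/-- The set of fixed-point-free involutions of `{1,…,6}` (realized on `Fin 6`). -/
def FPFInv : Set (Equiv.Perm (Fin 6)) := {σ | σ * σ = 1 ∧ ∀ i, σ i ≠ i}

/-- The subgroup of `S₆` generated by `(1 2 3)(4 5 6)` and `(1 4)(2 6)(3 5)`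
(zero-indexed on `Fin 6`). -/
def H13 : Subgroup (Equiv.Perm (Fin 6)) :=
  Subgroup.closure
    {Equiv.swap 0 1 * Equiv.swap 1 2 * (Equiv.swap 3 4 * Equiv.swap 4 5),
     Equiv.swap 0 3 * Equiv.swap 1 5 * Equiv.swap 2 4}

/-- The orbits of the conjugation action of `H13` on `FPFInv`. -/
def Orbits13 : Set (Set (Equiv.Perm (Fin 6))) :=
  (fun σ => {τ | ∃ g ∈ H13, g * σ * g⁻¹ = τ}) '' FPFInv

/-!
`H13` is the group `S₃ = {1, r, r², s, rs, r²s}` with `r = (1 2 3)(4 5 6)` and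
`s = (1 4)(2 6)(3 5)`, so every orbit is the image of six explicit permutations and the
whole statement reduces to a finite computation inside `S₆`. Its outcome: the three pairings
`(1 4)(2 5)(3 6)`, `(1 5)(2 6)(3 4)`, `(1 6)(2 4)(3 5)`, which match `{1, 2, 3}` with
`{4, 5, 6}` compatibly with `r`, are also fixed by `s`, and the remaining twelve pairings fall
into four orbits of size three.
-/

open Equiv

theorem Subgroup.coe_closure_eq_of_finset {G : Type*} [Group G] {s : Set G} {S : Finset G}
    (hsS : s ⊆ S) (hS : (S : Set G) ⊆ closure s) (h1 : (1 : G) ∈ S)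
    (hmul : ∀ x ∈ S, ∀ y ∈ S, x * y ∈ S) (hinv : ∀ x ∈ S, x⁻¹ ∈ S) :
    (closure s : Set G) = S :=
  let K : Subgroup G :=
    { carrier := S
      one_mem' := h1
      mul_mem' := fun hx hy => hmul _ hx _ hy
      inv_mem' := fun hx => hinv _ hx }
  congrArg SetLike.coe (closure_eq_of_le (K := K) hsS hS)

theorem Subgroup.setOf_conj_eq_coe_image {G : Type*} [Group G] [DecidableEq G] {H : Subgroup G}
    {S : Finset G} (hH : (H : Set G) = S) (σ : G) :
    {τ | ∃ g ∈ H, g * σ * g⁻¹ = τ} = ↑(S.image fun g => g * σ * g⁻¹) := by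
  rw [Finset.coe_image, ← hH]
  rfl

theorem Set.ncard_image_finset_coe {α : Type*} (T : Finset (Finset α)) :
    (((↑) : Finset α → Set α) '' T).ncard = T.card := by
  rw [Set.ncard_image_of_injective _ Finset.coe_injective, Set.ncard_coe_finset]

theorem Set.sep_ncard_image_finset_coe {α : Type*} (T : Finset (Finset α)) (n : ℕ) :
    {S ∈ ((↑) : Finset α → Set α) '' T | S.ncard = n} =
      ((↑) : Finset α → Set α) '' ↑(T.filter (·.card = n)) := by
  ext S
  simp only [Set.mem_ofPred_eq, Set.mem_image, Finset.coe_filter]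
  constructor
  · rintro ⟨⟨t, ht, rfl⟩, hcard⟩
    exact ⟨t, ⟨ht, by rwa [Set.ncard_coe_finset] at hcard⟩, rfl⟩
  · rintro ⟨t, ⟨ht, hcard⟩, rfl⟩
    exact ⟨⟨t, ht, rfl⟩, by rwa [Set.ncard_coe_finset]⟩

namespace H13

abbrev r : Perm (Fin 6) := swap 0 1 * swap 1 2 * (swap 3 4 * swap 4 5)

abbrev s : Perm (Fin 6) := swap 0 3 * swap 1 5 * swap 2 4

def elements : Finset (Perm (Fin 6)) := {1, r, r * r, s, r * s, r * r * s}

set_option maxRecDepth 8000 in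
theorem coe_eq_elements : (H13 : Set (Perm (Fin 6))) = elements := by
  refine Subgroup.coe_closure_eq_of_finset ?_ ?_ (by decide) (by decide) (by decide)
  · simp only [Set.insert_subset_iff, Set.singleton_subset_iff, Finset.mem_coe]
    decide
  · have hr : r ∈ H13 := Subgroup.subset_closure (Set.mem_insert _ _)
    have hs : s ∈ H13 := Subgroup.subset_closure (Set.mem_insert_of_mem _ rfl)
    simp only [elements, Finset.coe_insert, Finset.coe_singleton, Set.insert_subset_iff,
      Set.singleton_subset_iff, SetLike.mem_coe]
    exact ⟨one_mem _, hr, mul_mem hr hr, hs, mul_mem hr hs, mul_mem (mul_mem hr hr) hs⟩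

def conjOrbit (σ : Perm (Fin 6)) : Finset (Perm (Fin 6)) := elements.image fun g => g * σ * g⁻¹

end H13

def fpfInvolutions : Finset (Perm (Fin 6)) := Finset.univ.filter fun σ => σ * σ = 1 ∧ ∀ i, σ i ≠ i

theorem FPFInv_eq : FPFInv = fpfInvolutions := by
  ext σ
  simp [FPFInv, fpfInvolutions]

theorem Orbits13_eq :
    Orbits13 = ((↑) : Finset (Perm (Fin 6)) → Set (Perm (Fin 6))) ''
      ↑(fpfInvolutions.image H13.conjOrbit) := by
  rw [Orbits13, FPFInv_eq, Finset.coe_image, Set.image_image]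
  exact Set.image_congr fun σ _ => Subgroup.setOf_conj_eq_coe_image H13.coe_eq_elements σ

set_option maxRecDepth 2000 in
theorem card_fpfInvolutions_and_orbits :
    fpfInvolutions.card = 15 ∧ (fpfInvolutions.image H13.conjOrbit).card = 7 ∧
      ((fpfInvolutions.image H13.conjOrbit).filter (·.card = 1)).card = 3 ∧
      ((fpfInvolutions.image H13.conjOrbit).filter (·.card = 3)).card = 4 := by
  decide

theorem stmt13 :
    FPFInv.ncard = 15 ∧
    Orbits13.ncard = 7 ∧
    {S ∈ Orbits13 | S.ncard = 1}.ncard = 3 ∧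
    {S ∈ Orbits13 | S.ncard = 3}.ncard = 4 := by
  obtain ⟨h15, h7, h3, h4⟩ := card_fpfInvolutions_and_orbits
  simp only [FPFInv_eq, Set.ncard_coe_finset, Orbits13_eq, Set.ncard_image_finset_coe,
    Set.sep_ncard_image_finset_coe]
  exact ⟨h15, h7, h3, h4⟩
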